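/- arXiv:1412.2559 — 2 statements merged into one kernel-verified Lean document; each statement's English description precedes it below -/
import Mathlib

section
/- Let G be a graph and let G₁ be the graph obtained from G by subdividing each edge exactly twice (replacing each edge xy by a path x, a_e, b_e, y with new vertices a_e, b_e). Then τ(G₁) = τ(G) + |E(G)|, where τ denotes the vertex cover number. -/
/-!
A vertex cover `C` of `G` extends to one of `G₁` by adding, for each edge `xy`, the interior
vertex adjacent to an endpoint outside `C` (or either one if both are in `C`). Conversely, a
vertex cover `D` of `G₁` must contain an interior vertex of every edge `xy`, and must contain
both of them when neither `x` nor `y` is in `D`. Mapping `D` to `V ⊕ E(G)` by sending interior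
vertices to their edge, except one of each such pair to an endpoint, yields all of `E(G)`
together with a vertex cover of `G`, so `τ(G) + |E(G)| ≤ |D|`.
-/

open SimpleGraph

/-- The graph obtained from `G` by subdividing each edge exactly twice:
for each edge `xy` of `G`, the ordered pairs `(x,y)` and `(y,x)` are the two
new subdivision vertices, with `(x,y)` adjacent to `x`, and `(x,y)` adjacent
to `(y,x)`. -/
def doubleSub {V : Type*} (G : SimpleGraph V) : SimpleGraph (V ⊕ (V × V)) :=
  SimpleGraph.fromRel fun a b =>
    match a, b with
    | Sum.inl x, Sum.inr (p, q) => G.Adj p q ∧ x = p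
    | Sum.inr (p, q), Sum.inr (p', q') => G.Adj p q ∧ p' = q ∧ q' = p
    | _, _ => False

/-- The vertex cover number of a graph. -/
noncomputable def tau {V : Type*} (G : SimpleGraph V) : ℕ :=
  sInf {n | ∃ C : Set V, C.ncard = n ∧ ∀ e ∈ G.edgeSet, ∃ x ∈ C, x ∈ e}

theorem Set.ncard_preimage_inl_add_ncard_preimage_inr {α β : Type*} {s : Set (α ⊕ β)}
    (hs : s.Finite := by toFinite_tac) :
    (Sum.inl ⁻¹' s).ncard + (Sum.inr ⁻¹' s).ncard = s.ncard := by
  conv_rhs => rw [← image_preimage_inl_union_image_preimage_inr s]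
  rw [ncard_union_eq disjoint_image_inl_image_inr (hs.subset (by simp)) (hs.subset (by simp)),
    ncard_image_of_injective _ Sum.inl_injective, ncard_image_of_injective _ Sum.inr_injective]

theorem Sym2.out_mk_eq_or_eq_swap {α : Type*} (d : α × α) :
    (s(d.1, d.2) : Sym2 α).out = d ∨ (s(d.1, d.2) : Sym2 α).out = d.swap :=
  Sym2.mk_eq_mk_iff.1 (Quot.out_eq _)

namespace SimpleGraph

variable {V : Type*} {G : SimpleGraph V}

theorem isVertexCover_iff_forall_edge {C : Set V} :
    G.IsVertexCover C ↔ ∀ e ∈ G.edgeSet, ∃ x ∈ C, x ∈ e := by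
  refine ⟨fun hC e he => ?_, fun hC v w hvw => ?_⟩
  · induction e using Sym2.ind with
    | _ v w => rcases hC he with h | h <;> exact ⟨_, h, by simp⟩
  · obtain ⟨x, hx, hxe⟩ := hC s(v, w) hvw
    rcases Sym2.mem_iff.1 hxe with rfl | rfl <;> simp [hx]

theorem tau_le_ncard {C : Set V} (hC : G.IsVertexCover C) : tau G ≤ C.ncard :=
  Nat.sInf_le ⟨C, rfl, isVertexCover_iff_forall_edge.1 hC⟩

theorem exists_isVertexCover_ncard_eq_tau (G : SimpleGraph V) :
    ∃ C : Set V, G.IsVertexCover C ∧ C.ncard = tau G := by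
  obtain ⟨C, hC, hcov⟩ := Nat.sInf_mem (s := {n | ∃ C : Set V, C.ncard = n ∧
    ∀ e ∈ G.edgeSet, ∃ x ∈ C, x ∈ e}) ⟨_, _, rfl, isVertexCover_iff_forall_edge.1 isVertexCover_univ⟩
  exact ⟨C, isVertexCover_iff_forall_edge.2 hcov, hC⟩

open Sum

@[simp]
theorem doubleSub_adj_inl_inl (x y : V) : ¬ (doubleSub G).Adj (inl x) (inl y) := by
  simp [doubleSub]

@[simp]
theorem doubleSub_adj_inl_inr (x : V) (d : V × V) :
    (doubleSub G).Adj (inl x) (inr d) ↔ G.Adj d.1 d.2 ∧ x = d.1 := by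
  simp [doubleSub]

@[simp]
theorem doubleSub_adj_inr_inl (d : V × V) (x : V) :
    (doubleSub G).Adj (inr d) (inl x) ↔ G.Adj d.1 d.2 ∧ x = d.1 := by
  rw [adj_comm, doubleSub_adj_inl_inr]

@[simp]
theorem doubleSub_adj_inr_inr (d d' : V × V) :
    (doubleSub G).Adj (inr d) (inr d') ↔ G.Adj d.1 d.2 ∧ d' = d.swap := by
  obtain ⟨p, q⟩ := d
  obtain ⟨p', q'⟩ := d'
  simp only [doubleSub, fromRel_adj, ne_eq, inr.injEq, Prod.mk.injEq, Prod.swap_prod_mk]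
  constructor
  · rintro ⟨-, h | ⟨h, rfl, rfl⟩⟩
    exacts [h, ⟨h.symm, rfl, rfl⟩]
  · rintro ⟨h, rfl, rfl⟩
    exact ⟨fun h' => h.ne h'.1, Or.inl ⟨h, rfl, rfl⟩⟩

theorem isVertexCover_doubleSub_iff {D : Set (V ⊕ (V × V))} :
    (doubleSub G).IsVertexCover D ↔ ∀ ⦃p q : V⦄, G.Adj p q →
      (inl p ∈ D ∨ inr (p, q) ∈ D) ∧ (inr (p, q) ∈ D ∨ inr (q, p) ∈ D) := by
  refine ⟨fun hD p q hpq => ⟨hD (by simp [hpq]), hD (by simp [hpq])⟩, fun hD a b hab => ?_⟩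
  rcases a with x | d <;> rcases b with y | d'
  · simp at hab
  · obtain ⟨hd, rfl⟩ := (doubleSub_adj_inl_inr x d').1 hab
    exact (hD hd).1
  · obtain ⟨hd, rfl⟩ := (doubleSub_adj_inr_inl d y).1 hab
    exact (hD hd).1.symm
  · obtain ⟨hd, rfl⟩ := (doubleSub_adj_inr_inr d d').1 hab
    exact (hD hd).2

theorem IsVertexCover.exists_doubleSub [Finite V] {C : Set V} (hC : G.IsVertexCover C) :
    ∃ D, (doubleSub G).IsVertexCover D ∧ D.ncard ≤ C.ncard + G.edgeSet.ncard := by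
  classical
  -- the interior vertex of `e` next to `e.out.1` unless that endpoint is in `C`
  let pick : Sym2 V → V × V := fun e => if e.out.1 ∈ C then e.out.swap else e.out
  have hpick : ∀ ⦃p q⦄, G.Adj p q →
      (pick s(p, q) = (p, q) ∨ pick s(p, q) = (q, p)) ∧ (p ∉ C → pick s(p, q) = (p, q)) := by
    intro p q hpq
    have hq := (hC hpq).resolve_left
    rcases Sym2.out_mk_eq_or_eq_swap (p, q) with h | h <;>
      simp only [pick, h] <;> split_ifs <;> simp_all
  refine ⟨inl '' C ∪ inr '' (pick '' G.edgeSet), isVertexCover_doubleSub_iff.2 fun p q hpq => ?_, ?_⟩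
  · have hmem : inr (pick s(p, q)) ∈ inl '' C ∪ inr '' (pick '' G.edgeSet) :=
      Or.inr ⟨_, ⟨s(p, q), G.mem_edgeSet.2 hpq, rfl⟩, rfl⟩
    refine ⟨?_, ?_⟩
    · by_cases hp : p ∈ C
      · exact Or.inl (Or.inl ⟨p, hp, rfl⟩)
      · exact Or.inr ((hpick hpq).2 hp ▸ hmem)
    · rcases (hpick hpq).1 with h | h <;> rw [h] at hmem <;> simp [hmem]
  · calc (inl '' C ∪ inr '' (pick '' G.edgeSet)).ncard
        ≤ (inl '' C).ncard + (inr '' (pick '' G.edgeSet)).ncard := Set.ncard_union_le _ _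
      _ ≤ C.ncard + G.edgeSet.ncard := by
        rw [Set.ncard_image_of_injective _ inl_injective,
          Set.ncard_image_of_injective _ inr_injective]
        exact Nat.add_le_add_left (Set.ncard_image_le G.edgeSet.toFinite) _

theorem IsVertexCover.tau_add_ncard_edgeSet_le [Finite V] {D : Set (V ⊕ (V × V))}
    (hD : (doubleSub G).IsVertexCover D) : tau G + G.edgeSet.ncard ≤ D.ncard := by
  classical
  let proj : V ⊕ (V × V) → V ⊕ Sym2 V := Sum.elim inl fun d =>
    if inr d.swap ∈ D ∧ d ≠ s(d.1, d.2).out then inl d.2 else inr s(d.1, d.2)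
  set P := proj '' D
  have hedge : ∀ d, inr d ∈ D → inr s(d.1, d.2) ∈ P := by
    intro d hd
    by_cases h : inr d.swap ∈ D ∧ d ≠ s(d.1, d.2).out
    · have hout : s(d.1, d.2).out = d.swap := (Sym2.out_mk_eq_or_eq_swap d).resolve_left h.2.symm
      refine ⟨inr d.swap, h.1, ?_⟩
      simp [proj, Sym2.eq_swap, hout]
    · exact ⟨inr d, hd, by simp [proj, h]⟩
  have hE : G.edgeSet ⊆ inr ⁻¹' P := by
    intro e he
    induction e using Sym2.ind with
    | _ p q =>
      rcases (isVertexCover_doubleSub_iff.1 hD he).2 with h | h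
      · exact hedge _ h
      · simpa [Sym2.eq_swap] using hedge _ h
  have hC : G.IsVertexCover (inl ⁻¹' P) := by
    intro p q hpq
    have hpq' : (p, q) ≠ (q, p) := by simp [hpq.ne]
    have hendpoint : ∀ x, inl x ∈ D → inl x ∈ P := fun x hx => ⟨inl x, hx, rfl⟩
    have hboth : ∀ d : V × V, inr d ∈ D → inr d.swap ∈ D → d ≠ s(d.1, d.2).out → inl d.2 ∈ P :=
      fun d hd hd' hne => ⟨inr d, hd, by simp [proj, hd', hne]⟩
    rcases (isVertexCover_doubleSub_iff.1 hD hpq).1 with hp | hp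
    · exact Or.inl (hendpoint p hp)
    rcases (isVertexCover_doubleSub_iff.1 hD hpq.symm).1 with hq | hq
    · exact Or.inr (hendpoint q hq)
    rcases Sym2.out_mk_eq_or_eq_swap (p, q) with h | h
    · exact Or.inl (hboth (q, p) hq hp (by rw [Sym2.eq_swap]; simpa [h] using hpq'.symm))
    · exact Or.inr (hboth (p, q) hp hq (by simpa [h] using hpq'))
  calc tau G + G.edgeSet.ncard ≤ (inl ⁻¹' P).ncard + (inr ⁻¹' P).ncard :=
        add_le_add (tau_le_ncard hC) (Set.ncard_le_ncard hE)
    _ = P.ncard := Set.ncard_preimage_inl_add_ncard_preimage_inr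
    _ ≤ D.ncard := Set.ncard_image_le D.toFinite

end SimpleGraph

theorem stmt_4 {V : Type*} [Fintype V] (G : SimpleGraph V) :
    tau (doubleSub G) = tau G + G.edgeSet.ncard := by
  obtain ⟨C, hC, hCcard⟩ := exists_isVertexCover_ncard_eq_tau G
  obtain ⟨D, hD, hDcard⟩ := hC.exists_doubleSub
  obtain ⟨D₀, hD₀, hD₀card⟩ := exists_isVertexCover_ncard_eq_tau (doubleSub G)
  refine le_antisymm ?_ (hD₀card ▸ hD₀.tau_add_ncard_edgeSet_le)
  calc tau (doubleSub G) ≤ D.ncard := tau_le_ncard hD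
    _ ≤ tau G + G.edgeSet.ncard := hCcard ▸ hDcard
end

section
/- Let G = (V,E) be a graph with requirement function r : V → ℕ, and suppose X₁, …, X_m ⊆ V are pairwise disjoint non-empty sets such that each G[X_i] is connected and max_{x∈X_i} r(x) > |N_G(X_i)|. Then every vector connectivity set S for (G,r) satisfies |S| ≥ m. -/
open SimpleGraph

/-- A `v`–`S` fan of order `k` in `G`: `k` paths from `v` to vertices of `S`,
with distinct endpoints, pairwise intersecting only in `v`. -/
def HasFan {V : Type*} (G : SimpleGraph V) (v : V) (S : Set V) (k : ℕ) : Prop :=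
  ∃ (t : Fin k → V) (p : ∀ i : Fin k, G.Walk v (t i)),
    Function.Injective t ∧ (∀ i, (p i).IsPath) ∧ (∀ i, t i ∈ S) ∧
    ∀ i j, i ≠ j → ∀ x ∈ (p i).support, x ∈ (p j).support → x = v

/-- `S` is a vector connectivity set for `(G, r)`. -/
def VecConnSet {V : Type*} (G : SimpleGraph V) (r : V → ℕ) (S : Set V) : Prop :=
  ∀ v, v ∉ S → HasFan G v S (r v)

/-- The neighborhood `N_G(X)` of a set of vertices. -/
def setNbhd {V : Type*} (G : SimpleGraph V) (X : Set V) : Set V :=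
  {u | u ∉ X ∧ ∃ x ∈ X, G.Adj x u}

namespace SimpleGraph.Walk

variable {V : Type*} {G : SimpleGraph V}

lemma exists_mem_support_mem_setNbhd {X : Set V} {u w : V} (p : G.Walk u w)
    (hu : u ∈ X) (hw : w ∉ X) : ∃ y ∈ p.support, y ∈ setNbhd G X := by
  obtain ⟨d, hd, hdX, hdX'⟩ := p.exists_boundary_dart X hu hw
  exact ⟨d.snd, p.dart_snd_mem_support_of_mem_darts hd, hdX', d.fst, hdX, d.adj⟩

end SimpleGraph.Walk

section

variable {V : Type*} {G : SimpleGraph V}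

/-- Each path of the fan leaves `X` through its own vertex of `N_G(X)`, and these exit vertices
are distinct because the paths share only `v ∈ X`. -/
lemma HasFan.le_ncard_setNbhd {v : V} {S X : Set V} {k : ℕ} (hfan : HasFan G v S k)
    (hvX : v ∈ X) (hXS : Disjoint X S) (hfin : (setNbhd G X).Finite) :
    k ≤ (setNbhd G X).ncard := by
  obtain ⟨t, p, -, -, htS, hmeet⟩ := hfan
  have hexit (i : Fin k) : ∃ y ∈ (p i).support, y ∈ setNbhd G X :=
    (p i).exists_mem_support_mem_setNbhd hvX (hXS.notMem_of_mem_right (htS i))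
  choose y hyp hyN using hexit
  have hinj : Function.Injective y := by
    intro i j hij
    by_contra hne
    exact (hyN i).1 (hmeet i j hne (y i) (hyp i) (hij ▸ hyp j) ▸ hvX)
  simpa using Set.ncard_le_ncard_of_injOn y (fun i _ => hyN i) hinj.injOn (s := .univ) hfin

lemma VecConnSet.inter_nonempty {r : V → ℕ} {S X : Set V} (hS : VecConnSet G r S)
    {x : V} (hxX : x ∈ X) (hrx : (setNbhd G X).ncard < r x) (hfin : (setNbhd G X).Finite) :
    (X ∩ S).Nonempty := by
  by_contra hempty
  have hXS : Disjoint X S :=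
    Set.disjoint_iff_inter_eq_empty.mpr (Set.not_nonempty_iff_eq_empty.mp hempty)
  have hfan := hS x (hXS.notMem_of_mem_left hxX)
  exact (hfan.le_ncard_setNbhd hxX hXS hfin).not_gt hrx

lemma Set.le_ncard_of_forall_inter_nonempty {ι : Type*} [Fintype ι] {X : ι → Set V}
    {S : Set V} (hS : S.Finite) (hdisj : Pairwise fun i j ↦ Disjoint (X i) (X j))
    (hmeet : ∀ i, (X i ∩ S).Nonempty) : Fintype.card ι ≤ S.ncard := by
  choose s hsX hsS using hmeet
  have hinj : Function.Injective s := fun i j hij ↦ by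
    by_contra hne
    exact (hdisj hne).notMem_of_mem_left (hsX i) (hij ▸ hsX j)
  simpa using Set.ncard_le_ncard_of_injOn s (fun i _ => hsS i) hinj.injOn (s := .univ) hS

end

theorem stmt_11_general {V : Type*} [Fintype V] (G : SimpleGraph V) (r : V → ℕ)
    (m : ℕ) (X : Fin m → Set V)
    (hdisj : ∀ i j, i ≠ j → Disjoint (X i) (X j))
    (hreq : ∀ i, ∃ x ∈ X i, (setNbhd G (X i)).ncard < r x)
    (S : Set V) (hS : VecConnSet G r S) :
    m ≤ S.ncard := by
  have hmeet (i : Fin m) : (X i ∩ S).Nonempty := by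
    obtain ⟨x, hxX, hrx⟩ := hreq i
    exact hS.inter_nonempty hxX hrx (Set.toFinite _)
  simpa using Set.le_ncard_of_forall_inter_nonempty (Set.toFinite S) (fun i j => hdisj i j) hmeet

theorem stmt_11 {V : Type*} [Fintype V] (G : SimpleGraph V) (r : V → ℕ)
    (m : ℕ) (X : Fin m → Set V)
    (hdisj : ∀ i j, i ≠ j → Disjoint (X i) (X j))
    (hne : ∀ i, (X i).Nonempty)
    (hconn : ∀ i, (G.induce (X i)).Connected)
    (hreq : ∀ i, ∃ x ∈ X i, (setNbhd G (X i)).ncard < r x)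
    (S : Set V) (hS : VecConnSet G r S) :
    m ≤ S.ncard :=
  stmt_11_general G r m X hdisj hreq S hS
end
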